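/- arXiv:2307.00069 — 7 statements merged into one kernel-verified Lean document; each statement's English description precedes it below -/
import Mathlib

section
/- Let M be a nonempty type and ρ : M → M → Prop. Assume: (i) for every nonempty subset S of M there is a unique x ∈ S such that ρ x y for all y ∈ S (the Q-scheme); (ii) M has no ρ-greatest element: for every x there exists y with x ≠ y and ρ x y; (iii) the induction scheme: for every subset S of M, if S contains the least element of M and S is closed under immediate successors (whenever x ∈ S and y is the unique immediate successor of x, then y ∈ S), then S = M. Then there is a bijection e : M ≃ ℕ such that for all x, y ∈ M, ρ x y ↔ e x ≤ e y; i.e. (M, ρ) is order-isomorphic to the natural numbers. -/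
theorem statement4 (M : Type*) [Nonempty M] (ρ : M → M → Prop)
    (hQ : ∀ S : Set M, S.Nonempty → ∃! x, x ∈ S ∧ ∀ y ∈ S, ρ x y)
    (hnomax : ∀ x : M, ∃ y, x ≠ y ∧ ρ x y)
    (hind : ∀ S : Set M,
      (∀ x : M, (∀ y, ρ x y) → x ∈ S) →
      (∀ x ∈ S, ∀ y : M,
        (x ≠ y ∧ ρ x y ∧ ∀ z, z ≠ x → z ≠ y → ¬(ρ x z ∧ ρ z y)) → y ∈ S) →
      ∀ x : M, x ∈ S) :
    ∃ e : M ≃ ℕ, ∀ x y : M, ρ x y ↔ e x ≤ e y := by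
  classical
  have hrefl : ∀ x : M, ρ x x := by
    intro x
    obtain ⟨w, ⟨hw, hleast⟩, -⟩ := hQ {x} ⟨x, rfl⟩
    rcases hw with rfl
    exact hleast w rfl
  have hanti : ∀ x y : M, ρ x y → ρ y x → x = y := by
    intro x y hxy hyx
    obtain ⟨w, -, huniq⟩ := hQ {x, y} ⟨x, Or.inl rfl⟩
    have hx : x = w := huniq x ⟨Or.inl rfl, by rintro z (h | h) <;> rw [h]; exacts [hrefl x, hxy]⟩
    have hy : y = w := huniq y ⟨Or.inr rfl, by rintro z (h | h) <;> rw [h]; exacts [hyx, hrefl y]⟩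
    rw [hx, hy]
  have htrans : ∀ x y z : M, ρ x y → ρ y z → ρ x z := by
    intro x y z hxy hyz
    obtain ⟨w, ⟨hw, hleast⟩, -⟩ := hQ {x, y, z} ⟨x, Or.inl rfl⟩
    have hwx := hleast x (Or.inl rfl)
    have hwy := hleast y (Or.inr (Or.inl rfl))
    have hwz := hleast z (Or.inr (Or.inr rfl))
    rcases hw with rfl | rfl | rfl
    · exact hwz
    · rw [hanti x w hxy hwx]; exact hwz
    · rw [hanti y w hyz hwy] at hxy; exact hxy
  -- bottom element
  obtain ⟨b, hb, hbuniq⟩ := hQ Set.univ ⟨Classical.arbitrary M, trivial⟩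
  -- successor
  have hSne : ∀ x : M, ({y | x ≠ y ∧ ρ x y} : Set M).Nonempty := by
    intro x; obtain ⟨y, h1, h2⟩ := hnomax x; exact ⟨y, h1, h2⟩
  choose s hs using fun x => hQ _ (hSne x)
  set f : ℕ → M := fun n => Nat.rec b (fun _ m => s m) n with hf
  have hstep : ∀ n, ρ (f n) (f (n + 1)) ∧ f n ≠ f (n + 1) := by
    intro n
    have h := (hs (f n)).1.1
    exact ⟨h.2, h.1⟩
  have hmono : ∀ m n, m < n → ρ (f m) (f n) ∧ f m ≠ f n := by
    intro m n h
    induction n with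
    | zero => omega
    | succ k ih =>
      rcases Nat.lt_succ_iff_lt_or_eq.mp h with h' | rfl
      · obtain ⟨h1, h2⟩ := ih h'
        obtain ⟨h3, h4⟩ := hstep k
        refine ⟨htrans _ _ _ h1 h3, fun he => ?_⟩
        rw [he] at h1
        exact h4 (hanti _ _ h3 h1)
      · exact hstep m
  have hsurj : ∀ x : M, ∃ n, f n = x := by
    intro x
    refine hind {x | ∃ n, f n = x} ?_ ?_ x
    · intro z hz
      have : z = b := hbuniq z ⟨trivial, fun y _ => hz y⟩
      exact ⟨0, this.symm⟩
    · rintro z ⟨n, rfl⟩ y ⟨h1, h2, h3⟩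
      have hsz := (hs (f n)).1
      have hy : s (f n) = y := by
        by_contra hne
        exact h3 (s (f n)) (fun he => hsz.1.1 he.symm) hne ⟨hsz.1.2, hsz.2 y ⟨h1, h2⟩⟩
      exact ⟨n + 1, hy⟩
  have hinj : Function.Injective f := by
    intro m n he
    by_contra hne
    rcases Nat.lt_or_ge m n with h | h
    · exact (hmono m n h).2 he
    · exact (hmono n m (lt_of_le_of_ne h fun h' => hne h'.symm)).2 he.symm
  have hbij : Function.Bijective f := ⟨hinj, fun x => hsurj x⟩
  refine ⟨(Equiv.ofBijective f hbij).symm, ?_⟩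
  have key : ∀ n, (Equiv.ofBijective f hbij).symm (f n) = n := fun n =>
    (Equiv.ofBijective f hbij).symm_apply_apply n
  intro x y
  obtain ⟨m, rfl⟩ := hsurj x
  obtain ⟨n, rfl⟩ := hsurj y
  rw [key m, key n]
  constructor
  · intro h
    by_contra hle
    push_neg at hle
    obtain ⟨h1, h2⟩ := hmono n m hle
    exact h2 (hanti _ _ h1 h)
  · intro h
    rcases Nat.lt_or_ge m n with h' | h'
    · exact (hmono m n h').1
    · have : m = n := le_antisymm h h'
      rw [this]; exact hrefl _
end

section
/- Let M be a type and ρ : M → M → Prop. Assume that for every nonempty finite subset A of M there is a unique x ∈ A such that ρ x y holds for all y ∈ A. Then ρ is a reflexive linear order on M: ρ is reflexive, antisymmetric, transitive, and total (for all x, y, ρ x y or ρ y x). -/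
theorem statement5 (M : Type*) (ρ : M → M → Prop)
    (hF : ∀ A : Set M, A.Finite → A.Nonempty → ∃! x, x ∈ A ∧ ∀ y ∈ A, ρ x y) :
    (∀ x, ρ x x) ∧
    (∀ x y, ρ x y → ρ y x → x = y) ∧
    (∀ x y z, ρ x y → ρ y z → ρ x z) ∧
    (∀ x y, ρ x y ∨ ρ y x) := by
  have refl : ∀ x, ρ x x := by
    intro x
    obtain ⟨w, ⟨hw, hmin⟩, _⟩ := hF {x} (Set.finite_singleton x) ⟨x, rfl⟩
    rw [show x = w from hw.symm]
    exact hmin w hw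
  have antisym : ∀ x y, ρ x y → ρ y x → x = y := by
    intro x y hxy hyx
    obtain ⟨w, _, huniq⟩ := hF {x, y} ((Set.finite_singleton x).insert y |>.subset (by simp [Set.pair_comm])) ⟨x, Or.inl rfl⟩
    have hx : w = x := (huniq x ⟨Or.inl rfl, by rintro z (rfl | rfl); exacts [refl _, hxy]⟩).symm
    have hy : w = y := (huniq y ⟨Or.inr rfl, by rintro z (rfl | rfl); exacts [hyx, refl _]⟩).symm
    rw [← hx, hy]
  have total : ∀ x y, ρ x y ∨ ρ y x := by
    intro x y
    obtain ⟨w, ⟨hw, hmin⟩, _⟩ := hF {x, y} (Set.toFinite _) ⟨x, Or.inl rfl⟩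
    rcases hw with rfl | rfl
    · exact Or.inl (hmin y (Or.inr rfl))
    · exact Or.inr (hmin x (Or.inl rfl))
  refine ⟨refl, antisym, ?_, total⟩
  intro x y z hxy hyz
  obtain ⟨w, ⟨hw, hmin⟩, _⟩ := hF {x, y, z} (Set.toFinite _) ⟨x, Or.inl rfl⟩
  rcases hw with rfl | rfl | rfl
  · exact hmin z (Or.inr (Or.inr rfl))
  · have := antisym x w hxy (hmin x (Or.inl rfl))
    rw [this]; exact hyz
  · have := antisym y w hyz (hmin y (Or.inr (Or.inl rfl)))
    rw [← this]; exact hxy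
end

section
/- Let M be a type, m, k natural numbers, s ⊆ (Fin m → M) and t ⊆ (Fin k → M). If s satisfies the m-uniformity condition and t satisfies the k-uniformity condition, then the set of tuples u : Fin (m + k) → M whose first m coordinates form a tuple in s and whose last k coordinates form a tuple in t satisfies the (m + k)-uniformity condition. -/
/-- The `n`-uniformity condition for a set `s` of `n`-tuples: if `s` contains an injective
tuple, then every injective tuple belongs to `s` up to a permutation of coordinates. -/
def IsUniform {M : Type*} (n : ℕ) (s : Set (Fin n → M)) : Prop :=
  (∃ x ∈ s, Function.Injective x) →
    ∀ x : Fin n → M, Function.Injective x → ∃ σ : Equiv.Perm (Fin n), x ∘ σ ∈ s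


lemma natAdd_inj {m k : ℕ} : Function.Injective (Fin.natAdd m : Fin k → Fin (m + k)) := by
  intro a b h
  have := Fin.val_eq_of_eq h
  simp [Fin.natAdd] at this
  exact Fin.ext this

theorem statement6 (M : Type*) (m k : ℕ) (s : Set (Fin m → M)) (t : Set (Fin k → M))
    (hs : IsUniform m s) (ht : IsUniform k t) :
    IsUniform (m + k)
      {u : Fin (m + k) → M |
        (fun i : Fin m => u (Fin.castAdd k i)) ∈ s ∧
        (fun j : Fin k => u (Fin.natAdd m j)) ∈ t} := by
  rintro ⟨w, ⟨hws, hwt⟩, hw⟩ x hx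
  have hws' : ∃ y ∈ s, Function.Injective y :=
    ⟨_, hws, fun a b h => Fin.castAdd_injective m k (hw h)⟩
  have hwt' : ∃ y ∈ t, Function.Injective y :=
    ⟨_, hwt, fun a b h => natAdd_inj (hw h)⟩
  obtain ⟨σ₁, hσ₁⟩ := hs hws' (fun i => x (Fin.castAdd k i))
    (fun a b h => Fin.castAdd_injective m k (hx h))
  obtain ⟨σ₂, hσ₂⟩ := ht hwt' (fun j => x (Fin.natAdd m j))
    (fun a b h => natAdd_inj (hx h))
  refine ⟨finSumFinEquiv.symm.trans ((σ₁.sumCongr σ₂).trans finSumFinEquiv), ?_, ?_⟩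
  · convert hσ₁ using 1
    funext i
    simp [Function.comp]
  · convert hσ₂ using 1
    funext j
    simp [Function.comp]
end

section
/- Let M be a type, m, k natural numbers, s ⊆ (Fin m → M) and t ⊆ (Fin k → M). If s satisfies the m-uniformity condition and t satisfies the k-uniformity condition, then the set of tuples u : Fin (m + k) → M whose first m coordinates form a tuple in s OR whose last k coordinates form a tuple in t satisfies the (m + k)-uniformity condition. -/
theorem statement7 (M : Type*) (m k : ℕ) (s : Set (Fin m → M)) (t : Set (Fin k → M))
    (hs : IsUniform m s) (ht : IsUniform k t) :
    IsUniform (m + k)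
      {u : Fin (m + k) → M |
        (fun i : Fin m => u (Fin.castAdd k i)) ∈ s ∨
        (fun j : Fin k => u (Fin.natAdd m j)) ∈ t} := by
  rintro ⟨u, (hu | hu), huinj⟩ x hx
  · have huc : Function.Injective fun i : Fin m => u (Fin.castAdd k i) :=
      fun a b h => Fin.castAdd_injective m k (huinj h)
    have hxc : Function.Injective fun i : Fin m => x (Fin.castAdd k i) :=
      fun a b h => Fin.castAdd_injective m k (hx h)
    obtain ⟨σ, hσ⟩ := hs ⟨_, hu, huc⟩ _ hxc
    refine ⟨finSumFinEquiv.symm.trans ((σ.sumCongr (Equiv.refl (Fin k))).trans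
      finSumFinEquiv), Or.inl ?_⟩
    have : (fun i : Fin m => (x ∘ ⇑(finSumFinEquiv.symm.trans ((σ.sumCongr
        (Equiv.refl (Fin k))).trans finSumFinEquiv))) (Fin.castAdd k i)) =
        (fun i : Fin m => x (Fin.castAdd k i)) ∘ ⇑σ := by
      funext i
      simp only [Function.comp_apply, Equiv.trans_apply, Equiv.sumCongr_apply,
      finSumFinEquiv_symm_apply_castAdd, Sum.map_inl, Equiv.refl_apply,
      finSumFinEquiv_apply_left]
    exact this ▸ hσ
  · have huc : Function.Injective fun j : Fin k => u (Fin.natAdd m j) :=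
      fun a b h => by
        have := congrArg Fin.val (huinj h)
        simpa [Fin.ext_iff] using this
    have hxc : Function.Injective fun j : Fin k => x (Fin.natAdd m j) :=
      fun a b h => by
        have := congrArg Fin.val (hx h)
        simpa [Fin.ext_iff] using this
    obtain ⟨σ, hσ⟩ := ht ⟨_, hu, huc⟩ _ hxc
    refine ⟨finSumFinEquiv.symm.trans (((Equiv.refl (Fin m)).sumCongr σ).trans
      finSumFinEquiv), Or.inr ?_⟩
    have : (fun j : Fin k => (x ∘ ⇑(finSumFinEquiv.symm.trans (((Equiv.refl (Fin m)).sumCongr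
        σ).trans finSumFinEquiv))) (Fin.natAdd m j)) =
        (fun j : Fin k => x (Fin.natAdd m j)) ∘ ⇑σ := by
      funext j
      simp only [Function.comp_apply, Equiv.trans_apply, Equiv.sumCongr_apply,
      finSumFinEquiv_symm_apply_natAdd, Sum.map_inr, Equiv.refl_apply,
      finSumFinEquiv_apply_right]
    exact this ▸ hσ
end

section
/- Let M be a type with at least n elements (there is an injective map Fin n → M), where n ≥ 1, and let A : M → Prop. Suppose the set {x : Fin n → M | ∀ i, A (x i)} satisfies the n-uniformity condition, and suppose there exists an injective tuple x₀ : Fin n → M with A (x₀ i) for all i (i.e. A holds on n pairwise distinct elements). Then A holds on every element of M. -/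
theorem statement8 (M : Type*) (n : ℕ) (hn : 1 ≤ n)
    (hcard : ∃ f : Fin n → M, Function.Injective f) (A : M → Prop)
    (hu : IsUniform n {x : Fin n → M | ∀ i, A (x i)})
    (hx : ∃ x₀ : Fin n → M, Function.Injective x₀ ∧ ∀ i, A (x₀ i)) :
    ∀ a : M, A a := by
  intro a
  obtain ⟨x₀, hinj, hA⟩ := hx
  set z0 : Fin n := ⟨0, hn⟩ with hz0
  by_cases hr : ∃ i, x₀ i = a
  · obtain ⟨i, hi⟩ := hr
    exact hi ▸ hA i
  · push_neg at hr
    set y : Fin n → M := Function.update x₀ z0 a with hy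
    have hyinj : Function.Injective y := by
      intro i j hij
      by_cases hi : i = z0 <;> by_cases hj : j = z0
      · exact hi.trans hj.symm
      · exfalso
        rw [hy] at hij
        simp [Function.update_apply, hi, hj] at hij
        exact hr j hij.symm
      · exfalso
        rw [hy] at hij
        simp [Function.update_apply, hi, hj] at hij
        exact hr i hij
      · rw [hy] at hij
        simp [Function.update_apply, hi, hj] at hij
        exact hinj hij
    obtain ⟨σ, hσ⟩ := hu ⟨x₀, hA, hinj⟩ y hyinj
    have := hσ (σ.symm z0)
    simpa [hy, Function.update_apply] using this
end

section
/- Let M be a type containing at least three pairwise distinct elements, and let A : M → Prop. Suppose the set {x : Fin 2 → M | A (x 0) ∧ ¬A (x 1)} satisfies the 2-uniformity condition. Then A is constant: either every element of M satisfies A, or no element does. -/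
theorem statement11 (M : Type*) (h3 : ∃ a b c : M, a ≠ b ∧ b ≠ c ∧ a ≠ c) (A : M → Prop)
    (hu : IsUniform 2 {x : Fin 2 → M | A (x 0) ∧ ¬A (x 1)}) :
    (∀ x, A x) ∨ (∀ x, ¬A x) := by
  by_contra hc
  push_neg at hc
  obtain ⟨⟨p, hp⟩, ⟨q, hq⟩⟩ := hc
  have hpq : p ≠ q := fun h => hp (h ▸ hq)
  have hex : ∃ x ∈ {x : Fin 2 → M | A (x 0) ∧ ¬A (x 1)}, Function.Injective x := by
    refine ⟨![q, p], ⟨hq, hp⟩, ?_⟩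
    intro i j hij
    fin_cases i <;> fin_cases j <;> simp_all [Matrix.cons_val_zero, Matrix.cons_val_one]
  have key : ∀ x y : M, x ≠ y → (A x ∧ ¬A y) ∨ (A y ∧ ¬A x) := by
    intro x y hxy
    have hinj : Function.Injective ![x, y] := by
      intro i j hij
      fin_cases i <;> fin_cases j <;> simp_all [Matrix.cons_val_zero, Matrix.cons_val_one]
    obtain ⟨σ, hσ⟩ := hu hex ![x, y] hinj
    have hσ01 : (σ 0 = 0 ∧ σ 1 = 1) ∨ (σ 0 = 1 ∧ σ 1 = 0) := by
      rcases Fin.exists_fin_two.mp ⟨σ 0, rfl⟩ with h0 | h0 <;>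
      rcases Fin.exists_fin_two.mp ⟨σ 1, rfl⟩ with h1 | h1 <;>
      first
        | exact Or.inl ⟨h0, h1⟩
        | exact Or.inr ⟨h0, h1⟩
        | exact absurd (σ.injective (h0.trans h1.symm)) (by decide)
    obtain ⟨h1, h2⟩ := hσ
    simp only [Function.comp_apply] at h1 h2
    rcases hσ01 with ⟨e0, e1⟩ | ⟨e0, e1⟩
    · rw [e0] at h1; rw [e1] at h2
      exact Or.inl ⟨h1, h2⟩
    · rw [e0] at h1; rw [e1] at h2
      exact Or.inr ⟨h1, h2⟩
  obtain ⟨a, b, c, hab, hbc, hac⟩ := h3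
  -- find an element distinct from both p and q
  have ⟨r, hrp, hrq⟩ : ∃ r : M, r ≠ p ∧ r ≠ q := by
    by_cases h1 : a ≠ p ∧ a ≠ q
    · exact ⟨a, h1⟩
    by_cases h2 : b ≠ p ∧ b ≠ q
    · exact ⟨b, h2⟩
    push_neg at h1 h2
    refine ⟨c, fun hcp => ?_, fun hcq => ?_⟩ <;>
      rcases Classical.em (a = p) with hap | hap <;>
      rcases Classical.em (b = p) with hbp | hbp <;>
      simp_all
  rcases key p r hrp.symm with ⟨h1, _⟩ | ⟨hAr, _⟩
  · exact hp h1
  · rcases key q r hrq.symm with ⟨_, h4⟩ | ⟨_, h5⟩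
    · exact h4 hAr
    · exact h5 hq
end

section
/- Every subset of ℤ that is definable without parameters in the first-order language with one binary relation symbol, interpreted as the order ≤ on ℤ, is either empty or all of ℤ. -/
open FirstOrder Language

attribute [local instance] FirstOrder.Language.orderStructure

/-!
A set definable without parameters is invariant under every automorphism of the structure,
since automorphisms preserve the truth of formulas. The translations `x ↦ x + (b - a)` are order
automorphisms of `ℤ` acting transitively, so such a set contains all of `ℤ` as soon as it contains
one point.
-/

namespace Set

variable {L : Language} {M : Type*} [L.Structure M]

theorem Definable.comp_mem_iff {α F : Type*} [EquivLike F M M] [L.StrongHomClass F M M]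
    {s : Set (α → M)} (hs : (∅ : Set M).Definable L s) (g : F) (v : α → M) :
    g ∘ v ∈ s ↔ v ∈ s := by
  obtain ⟨φ, rfl⟩ := empty_definable_iff.mp hs
  exact StrongHomClass.realize_formula g φ

theorem Definable₁.apply_mem_iff {F : Type*} [EquivLike F M M] [L.StrongHomClass F M M]
    {s : Set M} (hs : (∅ : Set M).Definable₁ L s) (g : F) (a : M) :
    g a ∈ s ↔ a ∈ s :=
  hs.comp_mem_iff g fun _ => a

theorem Definable₁.eq_empty_or_eq_univ_of_transitive {F : Type*} [EquivLike F M M]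
    [L.StrongHomClass F M M] (htrans : ∀ a b : M, ∃ g : F, g a = b)
    {s : Set M} (hs : (∅ : Set M).Definable₁ L s) :
    s = ∅ ∨ s = univ := by
  refine (eq_empty_or_nonempty s).imp_right fun ⟨a, ha⟩ => eq_univ_of_forall fun b => ?_
  obtain ⟨g, rfl⟩ := htrans a b
  exact (hs.apply_mem_iff g a).mpr ha

end Set

instance FirstOrder.Language.orderedStructure_orderStructure {M : Type*} [LE M] :
    Language.order.OrderedStructure M :=
  ⟨fun _ => Iff.rfl⟩

theorem statement13 (s : Set ℤ) (h : Set.Definable₁ ∅ Language.order s) :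
    s = ∅ ∨ s = Set.univ :=
  h.eq_empty_or_eq_univ_of_transitive (F := ℤ ≃o ℤ) fun a b =>
    ⟨OrderIso.addRight (b - a), by simp⟩
end
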